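/- arXiv:1012.0260 — 4 statements merged into one kernel-verified Lean document; each statement's English description precedes it below -/
import Mathlib

section
/- For a binary string B of length n-1 (representing a line graph configuration where bit i indicates edge i exists), the cut-through routing time from node 1 to node n equals k(B) + 1 - b(B), where k(B) is the number of adjacent bit changes in B and b(B) is the first bit of B. -/
/-- Number of adjacent bit changes k(B) in a binary string. -/
def changes : List Bool → ℕ
  | a :: b :: rest => (if a ≠ b then 1 else 0) + changes (b :: rest)
  | _ => 0

/-- First bit b(B) of a binary string (0 if empty). -/
def firstBit : List Bool → ℕ
  | true :: _ => 1
  | _ => 0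

/-- Cut-through routing time on the line graph in the perfectly alternating
(1,1)-stochastic model: runs of present edges are traversed instantaneously,
a missing edge costs one waiting slot, after which every edge flips. -/
def cutTime : List Bool → ℕ
  | [] => 0
  | true :: rest => cutTime rest
  | false :: rest => 1 + cutTime (rest.map not)
termination_by l => l.length
decreasing_by all_goals simp [List.length_map]

lemma changes_map_not (l : List Bool) : changes (l.map not) = changes l := by
  induction l with
  | nil => rfl
  | cons a t ih =>
    cases t with
    | nil => rfl
    | cons b r =>
      simp only [List.map] at ih ⊢
      rw [changes, changes, ih]
      cases a <;> cases b <;> simp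

lemma cutTime_aux (l : List Bool) (h : l ≠ []) :
    cutTime l = changes l + 1 - firstBit l := by
  match l with
  | [a] => cases a <;> simp [cutTime, changes, firstBit]
  | true :: b :: r =>
    have ih := cutTime_aux (b :: r) (by simp)
    rw [cutTime, ih, changes]
    cases b <;> simp [firstBit, changes] <;> omega
  | false :: b :: r =>
    have ih := cutTime_aux ((b :: r).map not) (by simp)
    rw [cutTime, ih, changes_map_not, changes]
    cases b <;> simp [firstBit, changes] <;> omega
termination_by l.length
decreasing_by all_goals simp

theorem cutTime_eq_changes (n : ℕ) (hn : 2 ≤ n) (B : List Bool)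
    (hB : B.length = n - 1) :
    cutTime B = changes B + 1 - firstBit B := by
  apply cutTime_aux
  intro h
  subst h
  simp at hB
  omega
end

section
/- For all n ≥ 2, T ≥ 1, and 0 < p < 1, the probability of 1-to-n reachability in the stacked graph is at most that in the smashed graph: the sum over τ = 0 to T-1 of C(n+τ-2, τ)(1-p)^τ p^{n-1} is at most (1 - (1-p)^T)^{n-1}. -/
open Finset

/-- Hockey stick identity. -/
lemma hockey_stick (m τ : ℕ) :
    ∑ σ ∈ Finset.range (τ + 1), (m + σ).choose σ = (m + 1 + τ).choose τ := by
  induction τ with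
  | zero => simp
  | succ τ ih =>
      rw [Finset.sum_range_succ, ih,
        show m + (τ + 1) = m + 1 + τ from by omega,
        show m + 1 + (τ + 1) = (m + 1 + τ) + 1 from by omega,
        Nat.choose_succ_succ]

lemma geom_part (p : ℝ) (hp0 : 0 < p) (hp1 : p < 1) (T : ℕ) :
    ∑ τ ∈ Finset.range T, (1 - p) ^ τ * p = 1 - (1 - p) ^ T := by
  have hq : (1 - p) ≠ 1 := by linarith
  rw [← Finset.sum_mul, geom_sum_eq hq,
    show (1 - p) - 1 = -p from by ring, div_mul_eq_mul_div,
    div_eq_iff (neg_ne_zero.mpr hp0.ne')]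
  ring

lemma key (p : ℝ) (hp0 : 0 < p) (hp1 : p < 1) (T : ℕ) (m : ℕ) :
    ∑ τ ∈ Finset.range T, ((m + τ).choose τ : ℝ) * (1 - p) ^ τ * p ^ (m + 1)
      ≤ (1 - (1 - p) ^ T) ^ (m + 1) := by
  have hq0 : (0:ℝ) ≤ 1 - p := by linarith
  have hq1 : (1 - p) < 1 := by linarith
  have hqT : ∀ k : ℕ, (1 - p) ^ k ≤ 1 := fun k => pow_le_one₀ hq0 (by linarith)
  have hqTnn : (0:ℝ) ≤ 1 - (1 - p) ^ T := by linarith [hqT T]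
  induction m with
  | zero =>
      simp only [Nat.zero_add, Nat.choose_self, Nat.cast_one, one_mul, pow_one]
      rw [geom_part p hp0 hp1]
  | succ m ih =>
      -- rewrite choose via hockey stick
      have step1 : ∑ τ ∈ Finset.range T,
          ((m + 1 + τ).choose τ : ℝ) * (1 - p) ^ τ * p ^ (m + 2)
          = ∑ τ ∈ Finset.range T, ∑ σ ∈ Finset.range (τ + 1),
              ((m + σ).choose σ : ℝ) * ((1 - p) ^ τ * p ^ (m + 2)) := by
        refine Finset.sum_congr rfl fun τ _ => ?_
        rw [← hockey_stick m τ]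
        push_cast
        rw [Finset.sum_mul, Finset.sum_mul]
        simp only [mul_assoc]
      have step2 : ∑ τ ∈ Finset.range T, ∑ σ ∈ Finset.range (τ + 1),
              ((m + σ).choose σ : ℝ) * ((1 - p) ^ τ * p ^ (m + 2))
          = ∑ σ ∈ Finset.range T, ∑ τ ∈ Finset.Ico σ T,
              ((m + σ).choose σ : ℝ) * ((1 - p) ^ τ * p ^ (m + 2)) := by
        have h := Finset.sum_Ico_Ico_comm 0 T
          (fun σ τ => ((m + σ).choose σ : ℝ) * ((1 - p) ^ τ * p ^ (m + 2)))
        simp only [Nat.Ico_zero_eq_range] at h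
        exact h.symm
      show ∑ τ ∈ Finset.range T,
          ((m + 1 + τ).choose τ : ℝ) * (1 - p) ^ τ * p ^ (m + 2)
          ≤ (1 - (1 - p) ^ T) ^ (m + 2)
      rw [step1, step2]
      -- bound each inner sum
      have inner : ∀ σ ∈ Finset.range T,
          ∑ τ ∈ Finset.Ico σ T, ((m + σ).choose σ : ℝ) * ((1 - p) ^ τ * p ^ (m + 2))
          ≤ (1 - (1 - p) ^ T) * (((m + σ).choose σ : ℝ) * (1 - p) ^ σ * p ^ (m + 1)) := by
        intro σ hσ
        have hσT : σ ≤ T := le_of_lt (Finset.mem_range.mp hσ)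
        have hgeo : ∑ τ ∈ Finset.Ico σ T, (1 - p) ^ τ * p
            = (1 - p) ^ σ - (1 - p) ^ T := by
          rw [Finset.sum_Ico_eq_sum_range]
          have : ∀ i, (1 - p) ^ (σ + i) * p = (1 - p) ^ σ * ((1 - p) ^ i * p) := by
            intro i; rw [pow_add]; ring
          rw [Finset.sum_congr rfl fun i _ => this i, ← Finset.mul_sum,
            geom_part p hp0 hp1]
          have hpow : (1 - p) ^ σ * (1 - p) ^ (T - σ) = (1 - p) ^ T := by
            rw [← pow_add, Nat.add_sub_cancel' hσT]
          rw [mul_sub, mul_one, hpow]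
        have hsum : ∑ τ ∈ Finset.Ico σ T,
            ((m + σ).choose σ : ℝ) * ((1 - p) ^ τ * p ^ (m + 2))
            = ((m + σ).choose σ : ℝ) * p ^ (m + 1) * ((1 - p) ^ σ - (1 - p) ^ T) := by
          rw [← hgeo, Finset.mul_sum]
          refine Finset.sum_congr rfl fun τ _ => ?_
          ring
        rw [hsum]
        have hc : (0:ℝ) ≤ ((m + σ).choose σ : ℝ) * p ^ (m + 1) :=
          mul_nonneg (Nat.cast_nonneg _) (pow_nonneg hp0.le _)
        have hbound : (1 - p) ^ σ - (1 - p) ^ T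
            ≤ (1 - (1 - p) ^ T) * (1 - p) ^ σ := by
          have h1 : (1 - p) ^ σ * (1 - p) ^ T ≤ (1 - p) ^ T := by
            nlinarith [pow_nonneg hq0 T, hqT σ]
          nlinarith
        calc ((m + σ).choose σ : ℝ) * p ^ (m + 1) * ((1 - p) ^ σ - (1 - p) ^ T)
            ≤ ((m + σ).choose σ : ℝ) * p ^ (m + 1)
                * ((1 - (1 - p) ^ T) * (1 - p) ^ σ) := by
              exact mul_le_mul_of_nonneg_left hbound hc
          _ = (1 - (1 - p) ^ T) * (((m + σ).choose σ : ℝ) * (1 - p) ^ σ * p ^ (m + 1)) := by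
              ring
      calc ∑ σ ∈ Finset.range T, ∑ τ ∈ Finset.Ico σ T,
              ((m + σ).choose σ : ℝ) * ((1 - p) ^ τ * p ^ (m + 2))
          ≤ ∑ σ ∈ Finset.range T,
              (1 - (1 - p) ^ T) * (((m + σ).choose σ : ℝ) * (1 - p) ^ σ * p ^ (m + 1)) :=
            Finset.sum_le_sum inner
        _ = (1 - (1 - p) ^ T) * ∑ σ ∈ Finset.range T,
              ((m + σ).choose σ : ℝ) * (1 - p) ^ σ * p ^ (m + 1) := by
            rw [Finset.mul_sum]
        _ ≤ (1 - (1 - p) ^ T) * (1 - (1 - p) ^ T) ^ (m + 1) :=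
            mul_le_mul_of_nonneg_left ih hqTnn
        _ = (1 - (1 - p) ^ T) ^ (m + 2) := by ring

/-- The probability of 1-to-n reachability within `T` graphlets in the
stacked graph of the dynamic ER line graph `ER(n,p,L_n)` is at most the
reachability probability in the smashed graph:
`∑_{τ=0}^{T-1} C(n+τ-2, τ)(1-p)^τ p^(n-1) ≤ (1 - (1-p)^T)^(n-1)`. -/
theorem stacked_le_smashed (n T : ℕ) (hn : 2 ≤ n) (hT : 1 ≤ T)
    (p : ℝ) (hp0 : 0 < p) (hp1 : p < 1) :
    ∑ τ ∈ Finset.range T,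
        ((n + τ - 2).choose τ : ℝ) * (1 - p) ^ τ * p ^ (n - 1)
      ≤ (1 - (1 - p) ^ T) ^ (n - 1) := by
  have h := key p hp0 hp1 T (n - 2)
  have h1 : n - 1 = (n - 2) + 1 := by omega
  have h2 : ∀ τ : ℕ, n + τ - 2 = (n - 2) + τ := fun τ => by omega
  rw [h1]
  calc ∑ τ ∈ Finset.range T, ((n + τ - 2).choose τ : ℝ) * (1 - p) ^ τ * p ^ ((n - 2) + 1)
      = ∑ τ ∈ Finset.range T, (((n - 2) + τ).choose τ : ℝ) * (1 - p) ^ τ * p ^ ((n - 2) + 1) := by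
        exact Finset.sum_congr rfl fun τ _ => by rw [h2 τ]
    _ ≤ (1 - (1 - p) ^ T) ^ ((n - 2) + 1) := h
end

section
/- The m-smashed reachability probability sum_{τ=0}^{T/m - 1} C(n+τ-2, τ) (1-p)^{mτ} (1-(1-p)^m)^{n-1} is monotonically nondecreasing in m (for m dividing T): smashing more graphlets can only increase the estimated reachability probability; in particular with m = T it equals the fully smashed probability (1-(1-p)^T)^{n-1}, and with m = 1 it equals the stacked graph probability. -/
/-- Reachability probability from node 1 to node n within `T/m` smashed
graphlets of the `m`-smashed graph of `T` independent `ER(n,p,L_n)`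
graphlets. -/
noncomputable def mSmashProb (n T : ℕ) (p : ℝ) (m : ℕ) : ℝ :=
  ∑ τ ∈ Finset.range (T / m),
    ((n + τ - 2).choose τ : ℝ) * (1 - p) ^ (m * τ) * (1 - (1 - p) ^ m) ^ (n - 1)

namespace MSmashAux

/-- Negative binomial weight `C(M+j, j) (1-x)^j x^(M+1)`. -/
noncomputable def Q (M j : ℕ) (x : ℝ) : ℝ :=
  ((M + j).choose j : ℝ) * (1 - x) ^ j * x ^ (M + 1)

/-- AM-GM style inequality `N (N+j+1)^j ≤ (N+j)^(j+1)` in ℕ. -/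
lemma amgm (N j : ℕ) : N * (N + j + 1) ^ j ≤ (N + j) ^ (j + 1) := by
  induction j with
  | zero => simp
  | succ j ih =>
    have h1 : (N + j) * (N + j + 2) ≤ (N + j + 1) ^ 2 := by nlinarith
    have h3 : (N + j) ^ (j + 1) * (N + j + 2) ^ (j + 1)
        ≤ (N + j + 1) ^ j * (N + j + 1) ^ (j + 2) := by
      calc (N + j) ^ (j + 1) * (N + j + 2) ^ (j + 1)
          = ((N + j) * (N + j + 2)) ^ (j + 1) := by rw [Nat.mul_pow]
        _ ≤ ((N + j + 1) ^ 2) ^ (j + 1) := Nat.pow_le_pow_left h1 (j + 1)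
        _ = (N + j + 1) ^ j * (N + j + 1) ^ (j + 2) := by
            rw [← Nat.pow_mul, ← Nat.pow_add]; ring_nf
    have h5 : (N + j + 1) ^ j * (N * (N + j + 2) ^ (j + 1))
        ≤ (N + j + 1) ^ j * (N + j + 1) ^ (j + 2) := by
      calc (N + j + 1) ^ j * (N * (N + j + 2) ^ (j + 1))
          = N * (N + j + 1) ^ j * (N + j + 2) ^ (j + 1) := by ring
        _ ≤ (N + j) ^ (j + 1) * (N + j + 2) ^ (j + 1) :=
            Nat.mul_le_mul_right _ ih
        _ ≤ _ := h3
    have := Nat.le_of_mul_le_mul_left h5 (Nat.pow_pos (by omega) (n := j))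
    simpa [Nat.add_assoc] using this

/-- Contagion of negativity: once the NB weight for `N+1` drops below that of
`N`, it stays below. -/
lemma contagion {v z : ℝ} (hv : 0 < v) (hz : 0 < z) (N j : ℕ) (hN : 1 ≤ N)
    (H : ((N + j : ℕ) : ℝ) * z ^ j < (N : ℝ) * v ^ j) :
    ((N + j + 1 : ℕ) : ℝ) * z ^ (j + 1) < (N : ℝ) * v ^ (j + 1) := by
  push_cast at H ⊢
  have hvj : (0:ℝ) < v ^ j := pow_pos hv j
  have hzj : (0:ℝ) < z ^ j := pow_pos hz j
  have hN1 : (1:ℝ) ≤ (N : ℝ) := by exact_mod_cast hN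
  have hNj : (0:ℝ) < (N : ℝ) + j := by positivity
  have hNj1 : (0:ℝ) < (N : ℝ) + j + 1 := by positivity
  have key : ((N : ℝ) + j + 1) * z < ((N : ℝ) + j) * v := by
    by_contra hcon
    push_neg at hcon
    have h2 : (((N:ℝ) + j) * v) ^ j ≤ (((N:ℝ) + j + 1) * z) ^ j :=
      pow_le_pow_left₀ (by positivity) hcon j
    rw [mul_pow, mul_pow] at h2
    have c1 : ((N:ℝ) + j) ^ (j + 1) * v ^ j
        ≤ ((N:ℝ) + j + 1) ^ j * (((N:ℝ) + j) * z ^ j) := by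
      calc ((N:ℝ) + j) ^ (j + 1) * v ^ j
          = ((N:ℝ) + j) * (((N:ℝ) + j) ^ j * v ^ j) := by ring
        _ ≤ ((N:ℝ) + j) * (((N:ℝ) + j + 1) ^ j * z ^ j) :=
            mul_le_mul_of_nonneg_left h2 hNj.le
        _ = ((N:ℝ) + j + 1) ^ j * (((N:ℝ) + j) * z ^ j) := by ring
    have c2 : ((N:ℝ) + j + 1) ^ j * (((N:ℝ) + j) * z ^ j)
        < ((N:ℝ) + j + 1) ^ j * ((N:ℝ) * v ^ j) :=
      mul_lt_mul_of_pos_left H (pow_pos hNj1 j)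
    have c3 : ((N:ℝ) + j) ^ (j + 1) * v ^ j
        < ((N:ℝ) * ((N:ℝ) + j + 1) ^ j) * v ^ j := by
      have := lt_of_le_of_lt c1 c2
      calc ((N:ℝ) + j) ^ (j + 1) * v ^ j
          < ((N:ℝ) + j + 1) ^ j * ((N:ℝ) * v ^ j) := this
        _ = ((N:ℝ) * ((N:ℝ) + j + 1) ^ j) * v ^ j := by ring
    have c4 : ((N:ℝ) + j) ^ (j + 1) < (N:ℝ) * ((N:ℝ) + j + 1) ^ j :=
      lt_of_mul_lt_mul_right c3 hvj.le
    have hA : ((N:ℝ)) * ((N:ℝ) + j + 1) ^ j ≤ ((N:ℝ) + j) ^ (j + 1) := by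
      have := amgm N j
      have := (Nat.cast_le (α := ℝ)).mpr this
      push_cast at this
      linarith [this]
    linarith
  calc ((N:ℝ) + j + 1) * z ^ (j + 1)
      = (((N:ℝ) + j + 1) * z) * z ^ j := by ring
    _ < (((N:ℝ) + j) * v) * z ^ j := mul_lt_mul_of_pos_right key hzj
    _ = v * (((N:ℝ) + j) * z ^ j) := by ring
    _ < v * ((N:ℝ) * v ^ j) := mul_lt_mul_of_pos_left H hv
    _ = (N:ℝ) * v ^ (j + 1) := by ring


lemma hasSum_Q {x : ℝ} (hx0 : 0 < x) (hx1 : x < 1) (M : ℕ) :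
    HasSum (fun j => Q M j x) 1 := by
  have hr : ‖1 - x‖ < 1 := by
    rw [Real.norm_eq_abs, abs_lt]; constructor <;> linarith
  have h := hasSum_choose_mul_geometric_of_norm_lt_one (𝕜 := ℝ) M hr
  have h2 := h.mul_right (x ^ (M + 1))
  have hxpow : (0:ℝ) < x ^ (M + 1) := pow_pos hx0 _
  convert h2 using 1
  · rfl
  · funext j
    have : (j + M).choose M = (M + j).choose j := by
      rw [Nat.add_comm j M]; exact Nat.choose_symm_add
    rw [Q, this]
  · rw [show (1 : ℝ) - (1 - x) = x by ring]
    field_simp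

lemma Qlt_iff (M j : ℕ) {u w : ℝ} (hu0 : 0 < u)
    (hs : u ^ (M + 1) = w ^ (M + 2)) :
    (Q (M + 1) j w < Q M j u ↔
      ((M + 1 + j : ℕ) : ℝ) * (1 - w) ^ j < ((M + 1 : ℕ) : ℝ) * (1 - u) ^ j) := by
  have hC0 : (0:ℝ) < ((M + j).choose j : ℝ) := by
    exact_mod_cast Nat.choose_pos (Nat.le_add_left j M)
  have hM1 : (0:ℝ) < ((M + 1 : ℕ) : ℝ) := by positivity
  have hupow : (0:ℝ) < u ^ (M + 1) := pow_pos hu0 _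
  have hnat : (M + 1) * ((M + 1 + j).choose j) = (M + 1 + j) * ((M + j).choose j) := by
    have h1 := Nat.add_one_mul_choose_eq (M + j) M
    -- (M+j+1) * (M+j).choose M = (M+j+1).choose (M+1) * (M+1)
    have e1 : (M + j).choose M = (M + j).choose j := Nat.choose_symm_add
    have e2 : (M + j + 1).choose (M + 1) = (M + 1 + j).choose j := by
      rw [show M + j + 1 = (M + 1) + j by omega]
      exact Nat.choose_symm_add
    rw [e1, e2] at h1
    calc (M + 1) * ((M + 1 + j).choose j) = (M + 1 + j).choose j * (M + 1) := Nat.mul_comm _ _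
      _ = (M + j + 1) * ((M + j).choose j) := h1.symm
      _ = (M + 1 + j) * ((M + j).choose j) := by rw [show M + j + 1 = M + 1 + j by omega]
  have key : Q (M + 1) j w = ((M + 1 + j).choose j : ℝ) * (1 - w) ^ j * u ^ (M + 1) := by
    rw [Q, hs]
  rw [key, Q]
  rw [mul_lt_mul_iff_of_pos_right hupow]
  constructor
  · intro h
    have h' := mul_lt_mul_of_pos_left h hM1
    have e : ((M + 1 : ℕ) : ℝ) * (((M + 1 + j).choose j : ℝ) * (1 - w) ^ j)
        = ((M + j).choose j : ℝ) * (((M + 1 + j : ℕ) : ℝ) * (1 - w) ^ j) := by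
      have hnatR := congrArg (fun t : ℕ => (t : ℝ)) hnat
      push_cast at hnatR ⊢
      linear_combination (1 - w) ^ j * hnatR
    have e' : ((M + 1 : ℕ) : ℝ) * (((M + j).choose j : ℝ) * (1 - u) ^ j)
        = ((M + j).choose j : ℝ) * (((M + 1 : ℕ) : ℝ) * (1 - u) ^ j) := by ring
    rw [e, e'] at h'
    exact lt_of_mul_lt_mul_left h' hC0.le
  · intro h
    have h' := mul_lt_mul_of_pos_left h hC0
    have e : ((M + j).choose j : ℝ) * (((M + 1 + j : ℕ) : ℝ) * (1 - w) ^ j)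
        = ((M + 1 : ℕ) : ℝ) * (((M + 1 + j).choose j : ℝ) * (1 - w) ^ j) := by
      have hnatR := congrArg (fun t : ℕ => (t : ℝ)) hnat
      push_cast at hnatR ⊢
      linear_combination (-(1 - w) ^ j) * hnatR
    have e' : ((M + j).choose j : ℝ) * (((M + 1 : ℕ) : ℝ) * (1 - u) ^ j)
        = ((M + 1 : ℕ) : ℝ) * (((M + j).choose j : ℝ) * (1 - u) ^ j) := by ring
    rw [e, e'] at h'
    exact lt_of_mul_lt_mul_left h' hM1.le


lemma core (r M : ℕ) {u w : ℝ} (hu0 : 0 < u) (hu1 : u < 1)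
    (hw0 : 0 < w) (hw1 : w < 1) (hs : u ^ (M + 1) = w ^ (M + 2)) :
    ∑ j ∈ Finset.range r, Q M j u ≤ ∑ j ∈ Finset.range r, Q (M + 1) j w := by
  have hU := hasSum_Q hu0 hu1 M
  have hW := hasSum_Q hw0 hw1 (M + 1)
  set d : ℕ → ℝ := fun j => Q (M + 1) j w - Q M j u with hd
  have hdsum : HasSum d 0 := by simpa using hW.sub hU
  have hv : (0:ℝ) < 1 - u := by linarith
  have hz : (0:ℝ) < 1 - w := by linarith
  have hstep : ∀ j, d j < 0 → d (j + 1) < 0 := by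
    intro j hj
    have h1 : Q (M + 1) j w < Q M j u := by
      simp only [hd] at hj; linarith
    have h2 := (Qlt_iff M j hu0 hs).mp h1
    have h3 : ((M + 1 + j : ℕ) : ℝ) * (1 - w) ^ j
        < (((M + 1 : ℕ)) : ℝ) * (1 - u) ^ j := h2
    have h4 := contagion hv hz (M + 1) j (by omega) h3
    have h5 : Q (M + 1) (j + 1) w < Q M (j + 1) u :=
      (Qlt_iff M (j + 1) hu0 hs).mpr h4
    simp only [hd]; linarith
  have hgoal : 0 ≤ ∑ j ∈ Finset.range r, d j := by
    by_cases hall : ∀ j ∈ Finset.range r, 0 ≤ d j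
    · exact Finset.sum_nonneg hall
    · push_neg at hall
      obtain ⟨j₀, hj₀r, hj₀⟩ := hall
      have hjr : j₀ < r := Finset.mem_range.mp hj₀r
      have hneg : ∀ j, j₀ ≤ j → d j < 0 := by
        intro j hj
        induction j, hj using Nat.le_induction with
        | base => exact hj₀
        | succ j hj ih => exact hstep j ih
      have htail : ∀ i : ℕ, d (i + r) ≤ 0 := fun i => (hneg _ (by omega)).le
      have hsplit := Summable.sum_add_tsum_nat_add (f := d) r hdsum.summable
      have htsum0 : ∑' j, d j = 0 := hdsum.tsum_eq
      have htail_np : ∑' i, d (i + r) ≤ 0 := tsum_nonpos htail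
      rw [htsum0] at hsplit
      linarith
  rw [show ∑ j ∈ Finset.range r, d j
      = ∑ j ∈ Finset.range r, Q (M + 1) j w - ∑ j ∈ Finset.range r, Q M j u from
    Finset.sum_sub_distrib _ _] at hgoal
  linarith


lemma Q_step (k M : ℕ) (x : ℝ) :
    ∑ j ∈ Finset.range (k + 1), Q (M + 1) j x
      = ∑ j ∈ Finset.range (k + 1), Q M j x
        - ((M + 1 + k).choose k : ℝ) * (1 - x) ^ (k + 1) * x ^ (M + 1) := by
  set y : ℝ := 1 - x with hy
  set A : ℕ → ℝ := fun j => ((M + 1 + j).choose j : ℝ) * y ^ j with hA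
  set B : ℕ → ℝ := fun j => ((M + j).choose j : ℝ) * y ^ j with hB
  have hdiff : ∀ i, A (i + 1) - B (i + 1) = y * A i := by
    intro i
    have hpas : (M + 1 + (i + 1)).choose (i + 1)
        = (M + 1 + i).choose i + (M + (i + 1)).choose (i + 1) := by
      have h1 : (M + 1 + (i + 1)).choose (i + 1)
          = (M + 1 + i).choose i + (M + 1 + i).choose (i + 1) :=
        Nat.choose_succ_succ (M + 1 + i) i
      have h2 : (M + 1 + i).choose (i + 1) = (M + (i + 1)).choose (i + 1) := by
        rw [show M + 1 + i = M + (i + 1) by omega]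
      omega
    simp only [hA, hB, hpas]
    push_cast
    ring
  have hAB : ∑ j ∈ Finset.range (k + 1), A j
      = ∑ j ∈ Finset.range (k + 1), B j + y * ∑ i ∈ Finset.range k, A i := by
    have h1 : ∑ j ∈ Finset.range (k + 1), (A j - B j)
        = ∑ i ∈ Finset.range k, (A (i + 1) - B (i + 1)) + (A 0 - B 0) :=
      Finset.sum_range_succ' _ k
    have h2 : A 0 - B 0 = 0 := by simp [hA, hB]
    have h3 : ∑ i ∈ Finset.range k, (A (i + 1) - B (i + 1))
        = ∑ i ∈ Finset.range k, y * A i := Finset.sum_congr rfl fun i _ => hdiff i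
    rw [Finset.sum_sub_distrib, h2, h3, ← Finset.mul_sum] at h1
    linarith [h1]
  have hQ1 : ∀ j, Q (M + 1) j x = A j * x ^ (M + 1) - y * (A j * x ^ (M + 1)) := by
    intro j
    simp only [Q, hA]
    have : x ^ (M + 1 + 1) = x ^ (M + 1) * x := by ring
    rw [this, hy]
    ring
  have hQ0 : ∀ j, Q M j x = B j * x ^ (M + 1) := by
    intro j; simp only [Q, hB]; rfl
  have hsucc : ∑ j ∈ Finset.range (k + 1), A j
      = ∑ i ∈ Finset.range k, A i + A k := Finset.sum_range_succ A k
  have hQsum1 : ∑ j ∈ Finset.range (k + 1), Q (M + 1) j x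
      = (∑ j ∈ Finset.range (k + 1), A j) * x ^ (M + 1)
        - y * ((∑ j ∈ Finset.range (k + 1), A j) * x ^ (M + 1)) := by
    rw [Finset.sum_congr rfl fun j _ => hQ1 j, Finset.sum_sub_distrib,
      ← Finset.sum_mul, ← Finset.mul_sum, ← Finset.sum_mul]
  have hQsum0 : ∑ j ∈ Finset.range (k + 1), Q M j x
      = (∑ j ∈ Finset.range (k + 1), B j) * x ^ (M + 1) := by
    rw [Finset.sum_congr rfl fun j _ => hQ0 j, ← Finset.sum_mul]
  have hAk : A k = ((M + 1 + k).choose k : ℝ) * y ^ k := by simp [hA]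
  rw [hQsum1, hQsum0]
  linear_combination (x ^ (M + 1)) * hAB - (y * x ^ (M + 1)) * hsucc
    - (y * x ^ (M + 1)) * hAk

lemma identity (k M : ℕ) (x : ℝ) :
    ∑ τ ∈ Finset.range (M + 1), ((k + τ).choose τ : ℝ) * x ^ τ * (1 - x) ^ (k + 1)
      = 1 - ∑ j ∈ Finset.range (k + 1), Q M j x := by
  induction M with
  | zero =>
    have hq : ∀ j, Q 0 j x = (1 - x) ^ j * x := by
      intro j; simp [Q]
    have hR : ∑ j ∈ Finset.range (k + 1), Q 0 j x
        = (∑ j ∈ Finset.range (k + 1), (1 - x) ^ j) * x := by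
      rw [Finset.sum_mul]
      exact Finset.sum_congr rfl fun j _ => hq j
    rw [hR, Finset.sum_range_one]
    have hg := geom_sum_mul (1 - x) (k + 1)
    simp only [Nat.add_zero, Nat.choose_zero_right, Nat.cast_one, pow_zero, one_mul]
    linear_combination -hg
  | succ M ih =>
    rw [Finset.sum_range_succ, ih, Q_step]
    have hc : ((k + (M + 1)).choose (M + 1) : ℝ) = ((M + 1 + k).choose k : ℝ) := by
      norm_cast
      rw [show k + (M + 1) = (M + 1) + k by omega]
      exact Nat.choose_symm_add
    rw [hc]
    ring


lemma rpow_base {s : ℝ} (hs0 : 0 < s) (N : ℕ) (hN : 1 ≤ N) :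
    (s ^ (((N : ℝ))⁻¹)) ^ N = s := by
  have hN0 : ((N : ℝ)) ≠ 0 := by positivity
  rw [← Real.rpow_natCast (s ^ (((N : ℝ))⁻¹)) N, ← Real.rpow_mul hs0.le,
    inv_mul_cancel₀ hN0, Real.rpow_one]

lemma phi_mono (r : ℕ) {s : ℝ} (hs0 : 0 < s) (hs1 : s < 1) {N₂ N₁ : ℕ}
    (h2 : 1 ≤ N₂) (h12 : N₂ ≤ N₁) :
    ∑ j ∈ Finset.range r, Q (N₂ - 1) j (s ^ (((N₂ : ℝ))⁻¹))
      ≤ ∑ j ∈ Finset.range r, Q (N₁ - 1) j (s ^ (((N₁ : ℝ))⁻¹)) := by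
  induction N₁, h12 using Nat.le_induction with
  | base => exact le_refl _
  | succ N hN ih =>
    refine le_trans ih ?_
    have hN1 : 1 ≤ N := le_trans h2 hN
    set u : ℝ := s ^ (((N : ℝ))⁻¹) with hu
    set w : ℝ := s ^ ((((N + 1 : ℕ) : ℝ))⁻¹) with hw
    have hu0 : 0 < u := Real.rpow_pos_of_pos hs0 _
    have hw0 : 0 < w := Real.rpow_pos_of_pos hs0 _
    have hu1 : u < 1 := Real.rpow_lt_one hs0.le hs1 (by positivity)
    have hw1 : w < 1 := Real.rpow_lt_one hs0.le hs1 (by positivity)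
    have huN : u ^ ((N - 1) + 1) = s := by
      rw [show (N - 1) + 1 = N by omega]; exact rpow_base hs0 N hN1
    have hwN : w ^ ((N - 1) + 2) = s := by
      rw [show (N - 1) + 2 = N + 1 by omega]; exact rpow_base hs0 (N + 1) (by omega)
    have h := core r (N - 1) hu0 hu1 hw0 hw1 (huN.trans hwN.symm)
    rw [show (N - 1) + 1 = (N + 1) - 1 by omega] at h
    exact h

lemma mSmash_eq {n T m : ℕ} (hn : 2 ≤ n) (hT : 1 ≤ T) (hm : m ∣ T) (p : ℝ) :
    mSmashProb n T p m
      = 1 - ∑ j ∈ Finset.range (n - 1), Q (T / m - 1) j ((1 - p) ^ m) := by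
  have hm0 : 0 < m := Nat.pos_of_dvd_of_pos hm (by omega)
  have hN1 : 1 ≤ T / m := (Nat.one_le_div_iff hm0).mpr (Nat.le_of_dvd (by omega) hm)
  have hid := identity (n - 2) (T / m - 1) ((1 - p) ^ m)
  rw [show T / m - 1 + 1 = T / m by omega] at hid
  rw [show (n - 2) + 1 = n - 1 by omega] at hid
  rw [mSmashProb, ← hid]
  refine Finset.sum_congr rfl fun τ _ => ?_
  rw [show n + τ - 2 = (n - 2) + τ by omega, pow_mul]


end MSmashAux

open MSmashAux

/-- The `m`-smashed reachability probability is monotonically nondecreasing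
in `m` (over divisors `m` of `T`); with `m = T` it equals the fully smashed
probability `(1-(1-p)^T)^(n-1)`, and with `m = 1` it equals the stacked-graph
probability `∑_{τ=0}^{T-1} C(n+τ-2, τ)(1-p)^τ p^(n-1)`. -/
theorem mSmash_monotone (n T : ℕ) (hn : 2 ≤ n) (hT : 1 ≤ T)
    (p : ℝ) (hp0 : 0 < p) (hp1 : p < 1) :
    (∀ m₁ m₂ : ℕ, m₁ ∣ T → m₂ ∣ T → m₁ ≤ m₂ →
        mSmashProb n T p m₁ ≤ mSmashProb n T p m₂) ∧
    mSmashProb n T p T = (1 - (1 - p) ^ T) ^ (n - 1) ∧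
    mSmashProb n T p 1
      = ∑ τ ∈ Finset.range T,
          ((n + τ - 2).choose τ : ℝ) * (1 - p) ^ τ * p ^ (n - 1) := by
  have hq0 : (0:ℝ) < 1 - p := by linarith
  have hq1 : (1:ℝ) - p < 1 := by linarith
  refine ⟨?_, ?_, ?_⟩
  · intro m₁ m₂ hd1 hd2 h12
    have hm₁ : 0 < m₁ := Nat.pos_of_dvd_of_pos hd1 (by omega)
    have hm₂ : 0 < m₂ := Nat.pos_of_dvd_of_pos hd2 (by omega)
    have hs0 : (0:ℝ) < (1 - p) ^ T := pow_pos hq0 T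
    have hs1 : (1 - p) ^ T < 1 := pow_lt_one₀ hq0.le hq1 (by omega)
    have key : ∀ m : ℕ, m ∣ T → 0 < m →
        (1 - p) ^ m = ((1 - p) ^ T) ^ ((((T / m : ℕ) : ℝ))⁻¹) := by
      intro m hm hm0'
      have hNm : (T / m) * m = T := Nat.div_mul_cancel hm
      have hNpos : 0 < T / m := (Nat.one_le_div_iff hm0').mpr (Nat.le_of_dvd (by omega) hm)
      have hN0 : (((T / m : ℕ)) : ℝ) ≠ 0 := by positivity
      have hTm : ((T : ℝ)) * (((T / m : ℕ) : ℝ))⁻¹ = (m : ℝ) := by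
        have : ((T : ℝ)) = (((T / m : ℕ)) : ℝ) * (m : ℝ) := by exact_mod_cast hNm.symm
        rw [this]; field_simp
      calc (1 - p) ^ m = (1 - p) ^ ((m : ℝ)) := (Real.rpow_natCast _ m).symm
        _ = (1 - p) ^ (((T : ℝ)) * (((T / m : ℕ) : ℝ))⁻¹) := by rw [hTm]
        _ = ((1 - p) ^ ((T : ℝ))) ^ ((((T / m : ℕ) : ℝ))⁻¹) := Real.rpow_mul hq0.le _ _
        _ = ((1 - p) ^ T) ^ ((((T / m : ℕ) : ℝ))⁻¹) := by rw [Real.rpow_natCast]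
    have hN₂1 : 1 ≤ T / m₂ := (Nat.one_le_div_iff hm₂).mpr (Nat.le_of_dvd (by omega) hd2)
    have hN21 : T / m₂ ≤ T / m₁ := Nat.div_le_div_left h12 hm₁
    have hmono := phi_mono (n - 1) hs0 hs1 hN₂1 hN21
    rw [mSmash_eq hn hT hd1 p, mSmash_eq hn hT hd2 p, key m₁ hd1 hm₁, key m₂ hd2 hm₂]
    linarith
  · rw [mSmashProb, Nat.div_self (by omega : 0 < T), Finset.sum_range_one]
    simp
  · rw [mSmashProb, Nat.div_one]
    refine Finset.sum_congr rfl fun τ _ => ?_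
    rw [one_mul, pow_one, show (1:ℝ) - (1 - p) = p by ring]
end

section
/- In the temporal triangle, the temporal graph is 2-connected (removal of any single vertex leaves all remaining pairs T-reachable), but its stacked graph contains a bridge, hence T-2-connectivity is not stacked-graph reducible. -/
/-- Temporal reachability: `TReach E t u v` holds when there is a journey
from `u` to `v` using edges of the temporal graph `E` at nondecreasing times,
starting no earlier than time `t`. -/
inductive TReach (E : ℕ → Fin 3 → Fin 3 → Prop) : ℕ → Fin 3 → Fin 3 → Prop
  | refl (t : ℕ) (u : Fin 3) : TReach E t u u
  | step {t t' : ℕ} {u v w : Fin 3} :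
      t ≤ t' → E t' u v → TReach E t' v w → TReach E t u w

/-- The temporal triangle on vertices `a = 0`, `b = 1`, `c = 2`:
`E(1) = {(a,b)}`, `E(2) = {(b,c)}`, `E(3) = {(c,a)}` (edges undirected). -/
def triE : ℕ → Fin 3 → Fin 3 → Prop := fun t u v =>
  (t = 1 ∧ ((u, v) = (0, 1) ∨ (u, v) = (1, 0))) ∨
  (t = 2 ∧ ((u, v) = (1, 2) ∨ (u, v) = (2, 1))) ∨
  (t = 3 ∧ ((u, v) = (2, 0) ∨ (u, v) = (0, 2)))

/-- Underlying edge list of the stacked graph of the temporal triangle: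
vertices are pairs (vertex, time level), with the level edges of each
graphlet and the cross edges `(u,t)–(u,t+1)`. -/
def triStackedRel : Fin 3 × Fin 3 → Fin 3 × Fin 3 → Prop := fun x y =>
  ((x, y) ∈ ([((0, 0), (1, 0)), ((1, 1), (2, 1)), ((2, 2), (0, 2)),
              ((0, 0), (0, 1)), ((0, 1), (0, 2)),
              ((1, 0), (1, 1)), ((1, 1), (1, 2)),
              ((2, 0), (2, 1)), ((2, 1), (2, 2))] :
      List ((Fin 3 × Fin 3) × (Fin 3 × Fin 3))))

/-- Stacked graph of the temporal triangle, as an undirected simple graph. -/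
def triStacked : SimpleGraph (Fin 3 × Fin 3) := SimpleGraph.fromRel triStackedRel

lemma no_adj_not_reachable {V : Type*} {G : SimpleGraph V} {v w : V}
    (h : ∀ y, ¬ G.Adj v y) (hne : v ≠ w) : ¬ G.Reachable v w := by
  rintro ⟨p⟩
  cases p with
  | nil => exact hne rfl
  | cons hadj _ => exact h _ hadj

lemma tstep {E : ℕ → Fin 3 → Fin 3 → Prop} {t t' : ℕ} {u v : Fin 3}
    (h : t ≤ t') (he : E t' u v) : TReach E t u v :=
  TReach.step h he (TReach.refl _ _)

lemma d01 : (0 : Fin 3) ≠ 1 := by decide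
lemma d10 : (1 : Fin 3) ≠ 0 := by decide
lemma d02 : (0 : Fin 3) ≠ 2 := by decide
lemma d20 : (2 : Fin 3) ≠ 0 := by decide
lemma d12 : (1 : Fin 3) ≠ 2 := by decide
lemma d21 : (2 : Fin 3) ≠ 1 := by decide
lemma one_le_three : (1 : ℕ) ≤ 3 := by norm_num

/-- The temporal triangle is 2-connected in the temporal sense: after
removing any single vertex `x`, every pair of remaining vertices is
T-reachable.  Yet its stacked graph contains a bridge, namely the cross edge
between `c` at level 1 and `c` at level 2.  Hence T-2-connectivity is not
stacked-graph reducible. -/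
theorem temporal_triangle_not_StG_reducible :
    (∀ x u v : Fin 3, u ≠ x → v ≠ x →
        TReach (fun t a b => triE t a b ∧ a ≠ x ∧ b ≠ x) 1 u v) ∧
    triStacked.IsBridge s(((2 : Fin 3), (0 : Fin 3)), ((2 : Fin 3), (1 : Fin 3))) := by
  constructor
  · intro x u v hu hv
    fin_cases x <;> fin_cases u <;> fin_cases v <;> simp_all <;>
      first
        | exact TReach.refl _ _
        | exact tstep (t' := 1) (le_refl 1) ⟨Or.inl ⟨rfl, Or.inl rfl⟩, d02, d12⟩
        | exact tstep (t' := 1) (le_refl 1) ⟨Or.inl ⟨rfl, Or.inr rfl⟩, d12, d02⟩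
        | exact tstep (t' := 2) one_le_two ⟨Or.inr (Or.inl ⟨rfl, Or.inl rfl⟩), d10, d20⟩
        | exact tstep (t' := 2) one_le_two ⟨Or.inr (Or.inl ⟨rfl, Or.inr rfl⟩), d20, d10⟩
        | exact tstep (t' := 3) one_le_three ⟨Or.inr (Or.inr ⟨rfl, Or.inl rfl⟩), d21, d01⟩
        | exact tstep (t' := 3) one_le_three ⟨Or.inr (Or.inr ⟨rfl, Or.inr rfl⟩), d01, d21⟩
  · rw [SimpleGraph.isBridge_iff]
    refine And.right (a := triStacked.Adj (2, 0) (2, 1))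
      (b := ¬(triStacked \ SimpleGraph.fromEdgeSet {s(((2 : Fin 3), (0 : Fin 3)), ((2 : Fin 3), (1 : Fin 3)))}).Reachable (2, 0) (2, 1)) ⟨?_, ?_⟩
    · rw [triStacked, SimpleGraph.fromRel_adj]
      refine ⟨by decide, Or.inl ?_⟩
      simp [triStackedRel]
    · apply no_adj_not_reachable
      · intro y
        rw [SimpleGraph.sdiff_adj, triStacked, SimpleGraph.fromRel_adj,
          SimpleGraph.fromEdgeSet_adj]
        rintro ⟨⟨hne, h1⟩, h2⟩
        simp only [triStackedRel] at h1
        apply h2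
        refine ⟨?_, hne⟩
        revert h1
        revert hne
        revert h2
        fin_cases y <;> decide
      · decide
end
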